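/- Let 𝒱 be a left skew-closed category, 𝒜 a 𝒱-category, and A, B objects of 𝒜. The family of morphisms L^C_{A,B} : 𝒜(A,B) → [𝒜(C,A),𝒜(C,B)], indexed by objects C of 𝒜, is a limit cone for the diagram defining the presheaf hom Â(yA,yB); consequently Â(yA,yB) exists, and whenever it is given with its limit projections, the induced morphism y_{A,B} : 𝒜(A,B) → Â(yA,yB) is invertible. -/

import Mathlib

open CategoryTheory

universe v u w

/-- A left skew-closed category structure on a category `V` (Street, "Skew-closed categories"). -/
structure SkewClosedStruct (V : Type u) [Category.{v} V] where
  ihom : V → V → V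
  imap : ∀ {A A' B B' : V}, (A' ⟶ A) → (B ⟶ B') → (ihom A B ⟶ ihom A' B')
  imap_id : ∀ (A B : V), imap (𝟙 A) (𝟙 B) = 𝟙 (ihom A B)
  imap_comp : ∀ {A A' A'' B B' B'' : V} (f : A' ⟶ A) (f' : A'' ⟶ A') (g : B ⟶ B') (g' : B' ⟶ B''),
      imap (f' ≫ f) (g ≫ g') = imap f g ≫ imap f' g'
  unit : V
  i : ∀ A : V, ihom unit A ⟶ A
  i_natural : ∀ {A B : V} (f : A ⟶ B), imap (𝟙 unit) f ≫ i B = i A ≫ f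
  j : ∀ A : V, unit ⟶ ihom A A
  j_natural : ∀ {A B : V} (f : A ⟶ B), j A ≫ imap (𝟙 A) f = j B ≫ imap f (𝟙 B)
  L : ∀ A B C : V, ihom B C ⟶ ihom (ihom A B) (ihom A C)
  L_natural : ∀ {B B' C C' : V} (A : V) (f : B' ⟶ B) (g : C ⟶ C'),
      imap f g ≫ L A B' C' = L A B C ≫ imap (imap (𝟙 A) f) (imap (𝟙 A) g)
  L_extranatural : ∀ {A A' : V} (h : A' ⟶ A) (B C : V),
      L A B C ≫ imap (𝟙 (ihom A B)) (imap h (𝟙 C))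
        = L A' B C ≫ imap (imap h (𝟙 B)) (𝟙 (ihom A' C))
  SCC1 : ∀ A B C D : V,
      L A C D ≫ L (ihom A B) (ihom A C) (ihom A D) ≫
          imap (L A B C) (𝟙 (ihom (ihom A B) (ihom A D)))
        = L B C D ≫ imap (𝟙 (ihom B C)) (L A B D)
  SCC2 : ∀ A C : V, L A A C ≫ imap (j A) (𝟙 (ihom A C)) ≫ i (ihom A C) = 𝟙 (ihom A C)
  SCC3 : ∀ A B : V, j B ≫ L A B B = j (ihom A B)
  SCC4 : ∀ B C : V, L unit B C ≫ imap (𝟙 (ihom unit B)) (i C) = imap (i B) (𝟙 C)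
  SCC5 : j unit ≫ i unit = 𝟙 unit

/-- A category enriched in the left skew-closed category `𝒱`. -/
structure VCat (V : Type u) [Category.{v} V] (𝒱 : SkewClosedStruct V) where
  Obj : Type w
  Hom : Obj → Obj → V
  id : ∀ A, 𝒱.unit ⟶ Hom A A
  comp : ∀ A B C, Hom B C ⟶ 𝒱.ihom (Hom A B) (Hom A C)
  EC1 : ∀ A B C D,
      comp A C D ≫ 𝒱.L (Hom A B) (Hom A C) (Hom A D) ≫
          𝒱.imap (comp A B C) (𝟙 (𝒱.ihom (Hom A B) (Hom A D)))
        = comp B C D ≫ 𝒱.imap (𝟙 (Hom B C)) (comp A B D)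
  EC2 : ∀ A C, comp A A C ≫ 𝒱.imap (id A) (𝟙 (Hom A C)) ≫ 𝒱.i (Hom A C) = 𝟙 (Hom A C)
  EC3 : ∀ A B, id B ≫ comp A B B = 𝒱.j (Hom A B)

/-- A presheaf (right module) on a `𝒱`-category `𝒜`. -/
structure VPresheaf {V : Type u} [Category.{v} V] {𝒱 : SkewClosedStruct V}
    (𝒜 : VCat.{v, u, w} V 𝒱) where
  obj : 𝒜.Obj → V
  map : ∀ A B, obj A ⟶ 𝒱.ihom (𝒜.Hom B A) (obj B)
  EP1 : ∀ A B C,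
      map A B ≫ 𝒱.L (𝒜.Hom B C) (𝒜.Hom B A) (obj B) ≫
          𝒱.imap (𝒜.comp B C A) (𝟙 (𝒱.ihom (𝒜.Hom B C) (obj B)))
        = map A C ≫ 𝒱.imap (𝟙 (𝒜.Hom C A)) (map C B)
  EP2 : ∀ A, map A A ≫ 𝒱.imap (𝒜.id A) (𝟙 (obj A)) ≫ 𝒱.i (obj A) = 𝟙 (obj A)

/-- The family `f` is a cone over the diagram whose limit is the presheaf hom
`Â(P,Q)`, where the presheaves `P` and `Q` are given by raw data
(object families `PO`, `QO` and structure maps `PM`, `QM`). -/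
def IsPshCone {V : Type u} [Category.{v} V] (𝒱 : SkewClosedStruct V)
    (𝒜 : VCat.{v, u, w} V 𝒱)
    (PO : 𝒜.Obj → V) (PM : ∀ A B, PO A ⟶ 𝒱.ihom (𝒜.Hom B A) (PO B))
    (QO : 𝒜.Obj → V) (QM : ∀ A B, QO A ⟶ 𝒱.ihom (𝒜.Hom B A) (QO B))
    (X : V) (f : ∀ A, X ⟶ 𝒱.ihom (PO A) (QO A)) : Prop :=
  ∀ A B,
    f A ≫ 𝒱.imap (𝟙 (PO A)) (QM A B)
      = f B ≫ 𝒱.L (𝒜.Hom B A) (PO B) (QO B) ≫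
          𝒱.imap (PM A B) (𝟙 (𝒱.ihom (𝒜.Hom B A) (QO B)))

/-!
This is the enriched Yoneda lemma for `Q = yB`: for any presheaf `Q`, the structure maps
`Q_{A,C} : QA ⟶ [𝒜(C,A), QC]` form a limit cone for `Â(yA, Q)`. The cone condition is (EP1).
A cone `ξ` is induced by `ξ_A ≫ [j_A, 1] ≫ i : X ⟶ QA` (evaluation at the identity of `A`): the cone
condition at `(A, C)` together with (EC3) and (SCC2) recovers `ξ_C`, and (EP2) gives uniqueness.
Limit cones being unique up to isomorphism, `y_{A,B}` is invertible.
-/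

namespace SkewClosedStruct

variable {V : Type u} [Category.{v} V] (𝒱 : SkewClosedStruct V)

lemma imap_left_comm_imap_right {A A' B B' : V} (f : A' ⟶ A) (g : B ⟶ B') :
    𝒱.imap f (𝟙 B) ≫ 𝒱.imap (𝟙 A') g = 𝒱.imap (𝟙 A) g ≫ 𝒱.imap f (𝟙 B') := by
  rw [← 𝒱.imap_comp, ← 𝒱.imap_comp]
  simp

end SkewClosedStruct

/-- The presheaf hom `Â(P,Q)` exists and is `(H, p)`. -/
def IsPshLimit {V : Type u} [Category.{v} V] (𝒱 : SkewClosedStruct V)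
    (𝒜 : VCat.{v, u, w} V 𝒱)
    (PO : 𝒜.Obj → V) (PM : ∀ A B, PO A ⟶ 𝒱.ihom (𝒜.Hom B A) (PO B))
    (QO : 𝒜.Obj → V) (QM : ∀ A B, QO A ⟶ 𝒱.ihom (𝒜.Hom B A) (QO B))
    (H : V) (p : ∀ A, H ⟶ 𝒱.ihom (PO A) (QO A)) : Prop :=
  IsPshCone 𝒱 𝒜 PO PM QO QM H p ∧
    ∀ (X : V) (ξ : ∀ A, X ⟶ 𝒱.ihom (PO A) (QO A)),
      IsPshCone 𝒱 𝒜 PO PM QO QM X ξ → ∃! f : X ⟶ H, ∀ A, f ≫ p A = ξ A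

namespace IsPshLimit

variable {V : Type u} [Category.{v} V] {𝒱 : SkewClosedStruct V} {𝒜 : VCat.{v, u, w} V 𝒱}
  {PO : 𝒜.Obj → V} {PM : ∀ A B, PO A ⟶ 𝒱.ihom (𝒜.Hom B A) (PO B)}
  {QO : 𝒜.Obj → V} {QM : ∀ A B, QO A ⟶ 𝒱.ihom (𝒜.Hom B A) (QO B)}
  {H : V} {p : ∀ A, H ⟶ 𝒱.ihom (PO A) (QO A)}

lemma hom_ext (hH : IsPshLimit 𝒱 𝒜 PO PM QO QM H p) {f g : H ⟶ H}
    (hf : ∀ A, f ≫ p A = p A) (hg : ∀ A, g ≫ p A = p A) : f = g := by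
  obtain ⟨_, _, huniq⟩ := hH.2 H p hH.1
  rw [huniq f hf, huniq g hg]

lemma isIso_of_comp_eq {H' : V} {p' : ∀ A, H' ⟶ 𝒱.ihom (PO A) (QO A)}
    (hH : IsPshLimit 𝒱 𝒜 PO PM QO QM H p) (hH' : IsPshLimit 𝒱 𝒜 PO PM QO QM H' p')
    (y : H ⟶ H') (hy : ∀ A, y ≫ p' A = p A) : IsIso y := by
  obtain ⟨g, hg, -⟩ := hH.2 H' p' hH'.1
  refine ⟨g, hH.hom_ext (fun A => ?_) (fun A => Category.id_comp _),
    hH'.hom_ext (fun A => ?_) (fun A => Category.id_comp _)⟩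
  · rw [Category.assoc, hg, hy]
  · rw [Category.assoc, hy, hg]

end IsPshLimit

namespace VCat

variable {V : Type u} [Category.{v} V] {𝒱 : SkewClosedStruct V} (𝒜 : VCat.{v, u, w} V 𝒱)

def evalId (A : 𝒜.Obj) (X : V) : 𝒱.ihom (𝒜.Hom A A) X ⟶ X :=
  𝒱.imap (𝒜.id A) (𝟙 X) ≫ 𝒱.i X

lemma evalId_naturality (A : 𝒜.Obj) {X Y : V} (g : X ⟶ Y) :
    𝒜.evalId A X ≫ g = 𝒱.imap (𝟙 _) g ≫ 𝒜.evalId A Y := by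
  rw [evalId, evalId, Category.assoc, ← 𝒱.i_natural, ← Category.assoc, ← Category.assoc,
    𝒱.imap_left_comm_imap_right]

lemma imap_comp_evalId (C A : 𝒜.Obj) (X : V) :
    𝒱.imap (𝒜.comp C A A) (𝟙 _) ≫ 𝒜.evalId A (𝒱.ihom (𝒜.Hom C A) X)
      = 𝒱.imap (𝒱.j (𝒜.Hom C A)) (𝟙 _) ≫ 𝒱.i _ := by
  rw [evalId, ← Category.assoc, ← 𝒱.imap_comp, 𝒜.EC3, Category.comp_id]

/-- The representable presheaf `yK`. -/
def yoneda (K : 𝒜.Obj) : VPresheaf 𝒜 where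
  obj C := 𝒜.Hom C K
  map C D := 𝒜.comp D C K
  EP1 A B C := 𝒜.EC1 B C A K
  EP2 A := 𝒜.EC2 A K

end VCat

namespace VPresheaf

variable {V : Type u} [Category.{v} V] {𝒱 : SkewClosedStruct V} {𝒜 : VCat.{v, u, w} V 𝒱}
  (Q : VPresheaf 𝒜) (A : 𝒜.Obj)

lemma isPshCone_map :
    IsPshCone 𝒱 𝒜 (fun C => 𝒜.Hom C A) (fun C D => 𝒜.comp D C A) Q.obj Q.map
      (Q.obj A) (Q.map A) :=
  fun C D => (Q.EP1 A D C).symm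

lemma evalId_comp_map {X : V} {ξ : ∀ C, X ⟶ 𝒱.ihom (𝒜.Hom C A) (Q.obj C)}
    (hξ : IsPshCone 𝒱 𝒜 (fun C => 𝒜.Hom C A) (fun C D => 𝒜.comp D C A) Q.obj Q.map X ξ)
    (C : 𝒜.Obj) :
    (ξ A ≫ 𝒜.evalId A (Q.obj A)) ≫ Q.map A C = ξ C :=
  calc (ξ A ≫ 𝒜.evalId A (Q.obj A)) ≫ Q.map A C
      = (ξ A ≫ 𝒱.imap (𝟙 _) (Q.map A C)) ≫ 𝒜.evalId A _ := by
        rw [Category.assoc, 𝒜.evalId_naturality, Category.assoc]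
    _ = ξ C ≫ 𝒱.L (𝒜.Hom C A) (𝒜.Hom C A) (Q.obj C) ≫
          𝒱.imap (𝒱.j (𝒜.Hom C A)) (𝟙 _) ≫ 𝒱.i _ := by
        rw [hξ A C, Category.assoc, Category.assoc, 𝒜.imap_comp_evalId]
    _ = ξ C := by rw [𝒱.SCC2, Category.comp_id]

lemma eq_evalId_of_comp_map {X : V} (f : X ⟶ Q.obj A) :
    f = (f ≫ Q.map A A) ≫ 𝒜.evalId A (Q.obj A) := by
  rw [Category.assoc, VCat.evalId, Q.EP2, Category.comp_id]

theorem isPshLimit_map :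
    IsPshLimit 𝒱 𝒜 (fun C => 𝒜.Hom C A) (fun C D => 𝒜.comp D C A) Q.obj Q.map
      (Q.obj A) (Q.map A) := by
  refine ⟨Q.isPshCone_map A, fun X ξ hξ => ⟨ξ A ≫ 𝒜.evalId A _, Q.evalId_comp_map A hξ, ?_⟩⟩
  intro f hf
  rw [Q.eq_evalId_of_comp_map A f, hf A]

end VPresheaf

/-- (Street, "Skew-closed categories", §5 and §6.)
The family `L^C_{A,B} : 𝒜(A,B) ⟶ [𝒜(C,A),𝒜(C,B)]` is a limit cone for the diagram
defining the presheaf hom `Â(yA,yB)`; consequently `Â(yA,yB)` exists, and whenever it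
is given with its limit projections, the induced morphism
`y_{A,B} : 𝒜(A,B) ⟶ Â(yA,yB)` is invertible. -/
theorem yoneda_effect_on_homs_invertible {V : Type u} [Category.{v} V]
    (𝒱 : SkewClosedStruct V) (𝒜 : VCat.{v, u, w} V 𝒱) (A B : 𝒜.Obj) :
    -- the family `L^C_{A,B}` is a cone over the diagram defining `Â(yA,yB)`
    IsPshCone 𝒱 𝒜 (fun C => 𝒜.Hom C A) (fun C D => 𝒜.comp D C A)
      (fun C => 𝒜.Hom C B) (fun C D => 𝒜.comp D C B)
      (𝒜.Hom A B) (fun C => 𝒜.comp C A B) ∧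
    -- and it is a limit cone
    (∀ (X : V) (ξ : ∀ C, X ⟶ 𝒱.ihom (𝒜.Hom C A) (𝒜.Hom C B)),
      IsPshCone 𝒱 𝒜 (fun C => 𝒜.Hom C A) (fun C D => 𝒜.comp D C A)
        (fun C => 𝒜.Hom C B) (fun C D => 𝒜.comp D C B) X ξ →
      ∃! f : X ⟶ 𝒜.Hom A B, ∀ C, f ≫ 𝒜.comp C A B = ξ C) ∧
    -- hence, for any limit `(H, p)` of that diagram, the induced `y_{A,B}` is invertible
    (∀ (H : V) (p : ∀ C, H ⟶ 𝒱.ihom (𝒜.Hom C A) (𝒜.Hom C B)),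
      IsPshCone 𝒱 𝒜 (fun C => 𝒜.Hom C A) (fun C D => 𝒜.comp D C A)
        (fun C => 𝒜.Hom C B) (fun C D => 𝒜.comp D C B) H p →
      (∀ (X : V) (ξ : ∀ C, X ⟶ 𝒱.ihom (𝒜.Hom C A) (𝒜.Hom C B)),
        IsPshCone 𝒱 𝒜 (fun C => 𝒜.Hom C A) (fun C D => 𝒜.comp D C A)
          (fun C => 𝒜.Hom C B) (fun C D => 𝒜.comp D C B) X ξ →
        ∃! f : X ⟶ H, ∀ C, f ≫ p C = ξ C) →
      ∀ yAB : 𝒜.Hom A B ⟶ H, (∀ C, yAB ≫ p C = 𝒜.comp C A B) → IsIso yAB) := by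
  have hlim := (𝒜.yoneda B).isPshLimit_map A
  exact ⟨hlim.1, hlim.2, fun H p hp hH yAB hy => hlim.isIso_of_comp_eq ⟨hp, hH⟩ yAB hy⟩
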